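/- Let d ≥ 1, let x_1, …, x_{d+1} ∈ ℝ^d be affinely independent, let τ be their closed convex hull with Lebesgue measure |τ|, and let λ_1, …, λ_{d+1} be the barycentric coordinate functions of the simplex. Then for every coefficient vector u = (u_1, …, u_{d+1}) ∈ ℝ^{d+1}, the nodal basis is L²-stable on τ in the Riesz sense with explicit constants: (|τ| / ((d+1)(d+2))) ∑_{i=1}^{d+1} u_i² ≤ ∫_τ ( ∑_{i=1}^{d+1} u_i λ_i(x) )² dx ≤ (|τ| / (d+1)) ∑_{i=1}^{d+1} u_i². -/

import Mathlib

/-!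
The integral equals `|τ| (∑ uᵢ² + (∑ uᵢ)²) / ((d+1)(d+2))`, i.e. the mass matrix of the
barycentric basis is `|τ| (1 + δᵢⱼ) / ((d+1)(d+2))`; the two bounds then follow from
`0 ≤ (∑ uᵢ)² ≤ (d+1) ∑ uᵢ²`.

The affine chart from the corner simplex `{t ≥ 0, ∑ tᵢ ≤ 1}` onto `τ` pulls the barycentric
coordinates of `τ` back to `(t, 1 - ∑ tᵢ)` and multiplies every integral by the same Jacobian,
so it suffices to integrate `(∑ uⱼ βⱼ)²` over the corner simplex. Slicing at the first
coordinate `s`, the slice is the `d`-dimensional corner simplex scaled by `1 - s`, and on it the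
integrand is again a square of a barycentric combination, with coefficients
`(1 - s) uₖ₊₁ + s u₀`. Induction on `d` and a beta integral in `s` give the value
`(∑ uⱼ² + (∑ uⱼ)²) / (d+2)!`.
-/

open MeasureTheory Set Pointwise

def cornerSimplex (d : ℕ) : Set (Fin d → ℝ) := {t | (∀ i, 0 ≤ t i) ∧ ∑ i, t i ≤ 1}

lemma isClosed_cornerSimplex (d : ℕ) : IsClosed (cornerSimplex d) := by
  simp only [cornerSimplex, ofPred_and, ofPred_forall]
  exact (isClosed_iInter fun i => isClosed_le continuous_const (continuous_apply i)).inter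
    (isClosed_le (continuous_finsetSum _ fun i _ => continuous_apply i) continuous_const)

lemma measurableSet_cornerSimplex (d : ℕ) : MeasurableSet (cornerSimplex d) :=
  (isClosed_cornerSimplex d).measurableSet

lemma apply_mem_Icc_of_mem_cornerSimplex {d : ℕ} {t : Fin d → ℝ} (ht : t ∈ cornerSimplex d)
    (i : Fin d) : t i ∈ Icc 0 1 :=
  ⟨ht.1 i, (Finset.single_le_sum (fun j _ => ht.1 j) (Finset.mem_univ i)).trans ht.2⟩

lemma isCompact_cornerSimplex (d : ℕ) : IsCompact (cornerSimplex d) :=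
  (isCompact_univ_pi fun _ => isCompact_Icc).of_isClosed_subset (isClosed_cornerSimplex d)
    fun _ ht i _ => apply_mem_Icc_of_mem_cornerSimplex ht i

lemma mem_smul_cornerSimplex_iff {d : ℕ} {r : ℝ} (hr : 0 < r) {t : Fin d → ℝ} :
    t ∈ r • cornerSimplex d ↔ (∀ i, 0 ≤ t i) ∧ ∑ i, t i ≤ r := by
  rw [mem_smul_set_iff_inv_smul_mem₀ hr.ne']
  simp only [cornerSimplex, mem_ofPred_eq, Pi.smul_apply, smul_eq_mul, ← Finset.mul_sum,
    inv_mul_le_iff₀ hr, mul_one, mul_nonneg_iff_of_pos_left (inv_pos.2 hr)]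

lemma cons_mem_cornerSimplex_iff {d : ℕ} {s : ℝ} (hs : s < 1) {t : Fin d → ℝ} :
    Fin.cons s t ∈ cornerSimplex (d + 1) ↔ 0 ≤ s ∧ t ∈ (1 - s) • cornerSimplex d := by
  rw [mem_smul_cornerSimplex_iff (sub_pos.2 hs), le_sub_iff_add_le', ← and_assoc]
  simp only [cornerSimplex, mem_ofPred_eq, Fin.forall_fin_succ, Fin.cons_zero, Fin.cons_succ,
    Fin.sum_univ_succ]

lemma integral_eq_integral_integral_cons {E : Type*} [NormedAddCommGroup E] [NormedSpace ℝ E]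
    {n : ℕ} {F : (Fin (n + 1) → ℝ) → E} (hF : Integrable F) :
    ∫ t, F t = ∫ s, ∫ t, F (Fin.cons s t) := by
  have e := (volume_preserving_piFinSuccAbove (fun _ : Fin (n + 1) => ℝ) 0).symm
  have he : ∀ p : ℝ × (Fin n → ℝ),
      (MeasurableEquiv.piFinSuccAbove (fun _ => ℝ) 0).symm p = Fin.cons p.1 p.2 := fun p => by
    simp [MeasurableEquiv.piFinSuccAbove, Fin.consEquiv]
  have hF' := (e.integrable_comp_emb (MeasurableEquiv.measurableEmbedding _)).2 hF
  simp only [Function.comp_def, he, Measure.volume_eq_prod] at hF'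
  rw [← e.integral_comp', Measure.volume_eq_prod]
  simp only [he]
  exact integral_prod _ hF'

lemma setIntegral_cornerSimplex_succ {E : Type*} [NormedAddCommGroup E] [NormedSpace ℝ E]
    {d : ℕ} {g : (Fin (d + 1) → ℝ) → E} (hg : Continuous g) :
    ∫ t in cornerSimplex (d + 1), g t =
      ∫ s in (0 : ℝ)..1,
        (1 - s) ^ d • ∫ r in cornerSimplex d, g (Fin.cons s ((1 - s) • r)) := by
  set F : ℝ → E := fun s => ∫ t, (cornerSimplex (d + 1)).indicator g (Fin.cons s t)
  have hslice : ∀ s ∈ Ioo (0 : ℝ) 1,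
      F s = (1 - s) ^ d • ∫ r in cornerSimplex d, g (Fin.cons s ((1 - s) • r)) := by
    intro s ⟨hs0, hs1⟩
    have hr : 0 < 1 - s := sub_pos.2 hs1
    have hpre : Fin.cons s ⁻¹' cornerSimplex (d + 1) = (1 - s) • cornerSimplex d := by
      ext t
      simp only [mem_preimage, cons_mem_cornerSimplex_iff hs1, hs0.le, true_and]
    rw [Measure.setIntegral_comp_smul_of_pos _ (fun t => g (Fin.cons s t)) _ hr,
      Module.finrank_fintype_fun_eq_card, Fintype.card_fin,
      smul_inv_smul₀ (pow_ne_zero d hr.ne'),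
      ← integral_indicator ((measurableSet_cornerSimplex d).const_smul₀ _), ← hpre]
    simp only [F, ← indicator_comp_right, Function.comp_def]
  have hout : ∀ s ∉ Icc (0 : ℝ) 1, F s = 0 := by
    intro s hs
    have hzero : ∀ t, (cornerSimplex (d + 1)).indicator g (Fin.cons s t) = 0 := fun t =>
      indicator_of_notMem (fun ht => hs (apply_mem_Icc_of_mem_cornerSimplex ht 0)) g
    simp only [F, hzero, integral_zero]
  have hint : Integrable ((cornerSimplex (d + 1)).indicator g) :=
    (hg.continuousOn.integrableOn_compact (isCompact_cornerSimplex _)).integrable_indicator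
      (measurableSet_cornerSimplex _)
  -- `hslice` fails at `s = 1`, where the slice degenerates to a point.
  rw [← integral_indicator (measurableSet_cornerSimplex _),
    integral_eq_integral_integral_cons hint,
    ← setIntegral_eq_integral_of_forall_compl_eq_zero hout, integral_Icc_eq_integral_Ioo,
    setIntegral_congr_fun measurableSet_Ioo hslice, ← integral_Ioc_eq_integral_Ioo,
    intervalIntegral.integral_of_le zero_le_one]

lemma integral_one_sub_pow_mul_quadratic (d : ℕ) (A B C : ℝ) :
    ∫ s in (0 : ℝ)..1, (1 - s) ^ d * (A * (1 - s) ^ 2 + B * (s * (1 - s)) + C * s ^ 2) =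
      (A + B / (d + 2) + 2 * C / ((d + 1) * (d + 2))) / (d + 3) := by
  set p : ℝ → ℝ := fun r => (A - B + C) * r ^ (d + 2) + (B - 2 * C) * r ^ (d + 1) + C * r ^ d
  have hp : ∀ s : ℝ, (1 - s) ^ d * (A * (1 - s) ^ 2 + B * (s * (1 - s)) + C * s ^ 2) =
      p (1 - s) := fun s => by ring
  have hint : ∀ (n : ℕ) (a : ℝ), IntervalIntegrable (fun r : ℝ => a * r ^ n) volume 0 1 :=
    fun n a => (continuous_const.mul (continuous_pow n)).intervalIntegrable 0 1
  simp only [hp, intervalIntegral.integral_comp_sub_left p, sub_zero, sub_self, p]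
  rw [intervalIntegral.integral_add ((hint _ _).add (hint _ _)) (hint _ _),
    intervalIntegral.integral_add (hint _ _) (hint _ _)]
  simp only [intervalIntegral.integral_const_mul, integral_pow]
  push_cast
  field_simp
  ring

/-- Barycentric coordinates on `cornerSimplex d` with respect to the vertices
`e₀, …, e_{d-1}, 0`, in this order; `simplexChart x` sends these vertices to
`x 0, …, x (Fin.last d)`. -/
def cornerBary {d : ℕ} (t : Fin d → ℝ) : Fin (d + 1) → ℝ :=
  Fin.snoc t (1 - ∑ i, t i)

@[simp] lemma cornerBary_castSucc {d : ℕ} (t : Fin d → ℝ) (i : Fin d) :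
    cornerBary t i.castSucc = t i := Fin.snoc_castSucc ..

@[simp] lemma cornerBary_last {d : ℕ} (t : Fin d → ℝ) :
    cornerBary t (Fin.last d) = 1 - ∑ i, t i := Fin.snoc_last ..

lemma sum_cornerBary {d : ℕ} (t : Fin d → ℝ) : ∑ j, cornerBary t j = 1 := by
  simp [Fin.sum_univ_castSucc]

lemma continuous_cornerBary_apply {d : ℕ} (j : Fin (d + 1)) :
    Continuous fun t : Fin d → ℝ => cornerBary t j := by
  induction j using Fin.lastCases with
  | last => simp only [cornerBary_last]; fun_prop
  | cast i => simp only [cornerBary_castSucc]; fun_prop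

lemma cornerBary_cons_smul {d : ℕ} (s : ℝ) (r : Fin d → ℝ) :
    cornerBary (Fin.cons s ((1 - s) • r) : Fin (d + 1) → ℝ) =
      Fin.cons s ((1 - s) • cornerBary r) := by
  ext j
  induction j using Fin.lastCases with
  | last =>
    rw [cornerBary_last, ← Fin.succ_last, Fin.cons_succ, Pi.smul_apply, cornerBary_last,
      Fin.sum_univ_succ]
    simp only [Fin.cons_zero, Fin.cons_succ, Pi.smul_apply, smul_eq_mul, ← Finset.mul_sum]
    ring
  | cast i =>
    rw [cornerBary_castSucc]
    induction i using Fin.cases with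
    | zero => rfl
    | succ i => simp

lemma forall_cornerBary_nonneg_iff {d : ℕ} {t : Fin d → ℝ} :
    (∀ j, 0 ≤ cornerBary t j) ↔ t ∈ cornerSimplex d := by
  simp [Fin.forall_fin_succ', cornerSimplex]

lemma sum_mul_cons_smul_eq {n : ℕ} (u : Fin (n + 1) → ℝ) (s : ℝ) {b : Fin n → ℝ}
    (hb : ∑ k, b k = 1) :
    ∑ j, u j * (Fin.cons s ((1 - s) • b) : Fin (n + 1) → ℝ) j =
      ∑ k, ((1 - s) * u k.succ + s * u 0) * b k := by
  simp only [Fin.sum_univ_succ, Fin.cons_zero, Fin.cons_succ, Pi.smul_apply, smul_eq_mul,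
    add_mul, Finset.sum_add_distrib, ← Finset.mul_sum, hb, mul_one]
  rw [add_comm]
  congr 1
  · exact Finset.sum_congr rfl fun k _ => by ring
  · ring

open Nat in
theorem setIntegral_cornerSimplex_sq_sum_mul_cornerBary (d : ℕ) (u : Fin (d + 1) → ℝ) :
    ∫ t in cornerSimplex d, (∑ j, u j * cornerBary t j) ^ 2 =
      (∑ j, u j ^ 2 + (∑ j, u j) ^ 2) / (d + 2)! := by
  induction d with
  | zero =>
    have huniv : cornerSimplex 0 = univ := by ext t; simp [cornerSimplex]
    have hbary : ∀ t : Fin 0 → ℝ, cornerBary t 0 = 1 := fun t => by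
      simpa using cornerBary_last t
    have hvol : volume.real (univ : Set (Fin 0 → ℝ)) = 1 := by simp [Measure.real, volume_pi]
    simp [huniv, hbary, hvol]
  | succ d ih =>
    have hcont : Continuous fun t : Fin (d + 1) → ℝ => (∑ j, u j * cornerBary t j) ^ 2 := by
      have := continuous_cornerBary_apply (d := d + 1)
      fun_prop
    set U := ∑ k : Fin (d + 1), u k.succ
    set Q := ∑ k : Fin (d + 1), u k.succ ^ 2
    have hslice : ∀ s : ℝ, (1 - s) ^ d • ∫ r in cornerSimplex d,
        (∑ j, u j * cornerBary (Fin.cons s ((1 - s) • r) : Fin (d + 1) → ℝ) j) ^ 2 =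
        (1 - s) ^ d * ((Q + U ^ 2) * (1 - s) ^ 2 + 2 * (d + 2) * u 0 * U * (s * (1 - s)) +
          (d + 1) * (d + 2) * u 0 ^ 2 * s ^ 2) / (d + 2)! := by
      intro s
      simp only [cornerBary_cons_smul, sum_mul_cons_smul_eq u s (sum_cornerBary _), ih,
        smul_eq_mul]
      rw [mul_div_assoc]
      congr 2
      simp only [add_sq, mul_pow, Finset.sum_add_distrib, ← Finset.mul_sum, ← Finset.sum_mul,
        Finset.sum_const, Finset.card_univ, Fintype.card_fin, nsmul_eq_mul]
      push_cast
      ring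
    rw [setIntegral_cornerSimplex_succ hcont]
    simp only [hslice, intervalIntegral.integral_div, integral_one_sub_pow_mul_quadratic]
    rw [Fin.sum_univ_succ, Fin.sum_univ_succ (fun j => u j), Nat.factorial_succ (d + 1 + 1)]
    push_cast
    field_simp
    ring

lemma setIntegral_preimage_ofLp {ι E : Type*} [Fintype ι] [NormedAddCommGroup E]
    [NormedSpace ℝ E] (s : Set (ι → ℝ)) (g : (ι → ℝ) → E) :
    ∫ t in WithLp.ofLp ⁻¹' s, g t.ofLp ∂(volume : Measure (EuclideanSpace ℝ ι)) =
      ∫ t in s, g t :=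
  (PiLp.volume_preserving_ofLp ι).setIntegral_preimage_emb
    (MeasurableEquiv.toLp 2 (ι → ℝ)).symm.measurableEmbedding g s

section SimplexChart

variable {d : ℕ} {E : Type*} [NormedAddCommGroup E] [NormedSpace ℝ E]

noncomputable def simplexEdgeMap (x : Fin (d + 1) → E) : EuclideanSpace ℝ (Fin d) →L[ℝ] E :=
  ∑ i, (EuclideanSpace.proj i).smulRight (x i.castSucc - x (Fin.last d))

lemma simplexEdgeMap_apply (x : Fin (d + 1) → E) (t : EuclideanSpace ℝ (Fin d)) :
    simplexEdgeMap x t = ∑ i, t.ofLp i • (x i.castSucc - x (Fin.last d)) := by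
  simp [simplexEdgeMap]

noncomputable def simplexChart (x : Fin (d + 1) → E) (t : EuclideanSpace ℝ (Fin d)) : E :=
  x (Fin.last d) + simplexEdgeMap x t

lemma AffineMap.apply_simplexChart {F : Type*} [AddCommGroup F] [Module ℝ F]
    (φ : E →ᵃ[ℝ] F) (x : Fin (d + 1) → E) (t : EuclideanSpace ℝ (Fin d)) :
    φ (simplexChart x t) = ∑ j, cornerBary t.ofLp j • φ (x j) := by
  have hlin : ∀ i : Fin d, φ.linear (x i.castSucc - x (Fin.last d)) =
      φ (x i.castSucc) - φ (x (Fin.last d)) := fun i => φ.linearMap_vsub _ _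
  rw [simplexChart, add_comm, ← vadd_eq_add, φ.map_vadd, simplexEdgeMap_apply, map_sum]
  simp only [map_smul, hlin]
  simp only [Fin.sum_univ_castSucc, cornerBary_castSucc, cornerBary_last, vadd_eq_add, smul_sub,
    sub_smul, one_smul, Finset.sum_sub_distrib, Finset.sum_smul]
  abel

lemma AffineBasis.coord_simplexChart (b : AffineBasis (Fin (d + 1)) ℝ E)
    (t : EuclideanSpace ℝ (Fin d)) (j : Fin (d + 1)) :
    b.coord j (simplexChart b t) = cornerBary t.ofLp j := by
  classical
  simp only [AffineMap.apply_simplexChart, b.coord_apply, smul_eq_mul, mul_ite, mul_one, mul_zero,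
    Finset.sum_ite_eq, Finset.mem_univ, if_true]

lemma hasFDerivAt_simplexChart (x : Fin (d + 1) → E) (t : EuclideanSpace ℝ (Fin d)) :
    HasFDerivAt (simplexChart x) (simplexEdgeMap x) t :=
  (simplexEdgeMap x).hasFDerivAt.const_add _

lemma simplexChart_injective (b : AffineBasis (Fin (d + 1)) ℝ E) :
    Function.Injective (simplexChart b) := fun t₁ t₂ h => PiLp.ext fun i => by
  simpa only [b.coord_simplexChart, cornerBary_castSucc] using congrArg (b.coord i.castSucc) h

lemma image_simplexChart (b : AffineBasis (Fin (d + 1)) ℝ E) :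
    simplexChart b '' (WithLp.ofLp ⁻¹' cornerSimplex d) = convexHull ℝ (range b) := by
  rw [b.convexHull_eq_nonneg_coord]
  ext y
  constructor
  · rintro ⟨t, ht, rfl⟩ j
    rw [b.coord_simplexChart]
    exact forall_cornerBary_nonneg_iff.2 ht j
  · intro hy
    set t : EuclideanSpace ℝ (Fin d) := WithLp.toLp 2 fun i => b.coord i.castSucc y
    have hbary : cornerBary t.ofLp = fun j => b.coord j y := by
      ext j
      induction j using Fin.lastCases with
      | last =>
        rw [cornerBary_last, ← b.sum_coord_apply_eq_one y, Fin.sum_univ_castSucc]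
        simp [t]
      | cast i => simp [t]
    refine ⟨t, forall_cornerBary_nonneg_iff.1 (hbary ▸ hy), b.ext_elem fun j => ?_⟩
    rw [b.coord_simplexChart, hbary]

end SimplexChart

lemma setIntegral_image_simplexChart {d : ℕ}
    (b : AffineBasis (Fin (d + 1)) ℝ (EuclideanSpace ℝ (Fin d)))
    {s : Set (EuclideanSpace ℝ (Fin d))} (hs : MeasurableSet s)
    {F : Type*} [NormedAddCommGroup F] [NormedSpace ℝ F] (g : EuclideanSpace ℝ (Fin d) → F) :
    ∫ y in simplexChart b '' s, g y =
      |(simplexEdgeMap b).det| • ∫ t in s, g (simplexChart b t) := by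
  rw [integral_image_eq_integral_abs_det_fderiv_smul volume hs
    (fun t _ => (hasFDerivAt_simplexChart b t).hasFDerivWithinAt)
    (simplexChart_injective b).injOn, integral_smul]

open Nat in
theorem setIntegral_convexHull_sq_sum_mul_coord {d : ℕ}
    (b : AffineBasis (Fin (d + 1)) ℝ (EuclideanSpace ℝ (Fin d))) (u : Fin (d + 1) → ℝ) :
    ∫ y in convexHull ℝ (range b), (∑ i, u i * b.coord i y) ^ 2 =
      volume.real (convexHull ℝ (range b)) * (∑ i, u i ^ 2 + (∑ i, u i) ^ 2) /
        ((d + 1) * (d + 2)) := by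
  have hmeas :
      MeasurableSet (WithLp.ofLp ⁻¹' cornerSimplex d : Set (EuclideanSpace ℝ (Fin d))) :=
    (measurableSet_cornerSimplex d).preimage (MeasurableEquiv.toLp 2 _).symm.measurable
  have key : ∀ v : Fin (d + 1) → ℝ,
      ∫ y in convexHull ℝ (range b), (∑ i, v i * b.coord i y) ^ 2 =
      |(simplexEdgeMap b).det| * ((∑ i, v i ^ 2 + (∑ i, v i) ^ 2) / (d + 2)!) := fun v => by
    rw [← image_simplexChart b, setIntegral_image_simplexChart b hmeas, smul_eq_mul]
    simp only [b.coord_simplexChart]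
    rw [setIntegral_preimage_ofLp (cornerSimplex d) fun t => (∑ i, v i * cornerBary t i) ^ 2,
      setIntegral_cornerSimplex_sq_sum_mul_cornerBary]
  have hvol : volume.real (convexHull ℝ (range b)) =
      |(simplexEdgeMap b).det| * ((d + 1 + (d + 1) ^ 2) / (d + 2)!) := by
    simpa [b.sum_coord_apply_eq_one] using key 1
  rw [key u, hvol, factorial_succ (d + 1), factorial_succ d]
  push_cast
  field_simp
  ring

theorem nodal_basis_L2_riesz_stability_general
    (d : ℕ)
    (x : Fin (d + 1) → EuclideanSpace ℝ (Fin d))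
    (hx : AffineIndependent ℝ x)
    (τ : Set (EuclideanSpace ℝ (Fin d)))
    (hτ : τ = convexHull ℝ (Set.range x))
    (lam : Fin (d + 1) → (EuclideanSpace ℝ (Fin d) →ᵃ[ℝ] ℝ))
    (hlam : ∀ i j, lam i (x j) = if i = j then 1 else 0)
    (u : Fin (d + 1) → ℝ) :
    (volume τ).toReal / (((d : ℝ) + 1) * ((d : ℝ) + 2)) * ∑ i, (u i) ^ 2 ≤
        ∫ y in τ, (∑ i, u i * lam i y) ^ 2 ∧
      ∫ y in τ, (∑ i, u i * lam i y) ^ 2 ≤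
        (volume τ).toReal / ((d : ℝ) + 1) * ∑ i, (u i) ^ 2 := by
  have hspan : affineSpan ℝ (range x) = ⊤ :=
    hx.affineSpan_eq_top_iff_card_eq_finrank_add_one.2 (by simp)
  set b : AffineBasis (Fin (d + 1)) ℝ (EuclideanSpace ℝ (Fin d)) := ⟨x, hx, hspan⟩
  have hlam_coord : lam = b.coord := funext fun i => AffineMap.ext_on hspan <| by
    rintro - ⟨j, rfl⟩
    exact (hlam i j).trans (b.coord_apply i j).symm
  have hmass : ∫ y in τ, (∑ i, u i * lam i y) ^ 2 =
      (volume τ).toReal * (∑ i, u i ^ 2 + (∑ i, u i) ^ 2) / ((d + 1) * (d + 2)) := by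
    rw [hτ, hlam_coord]
    exact setIntegral_convexHull_sq_sum_mul_coord b u
  have hsq : (∑ i, u i) ^ 2 ≤ (d + 1) * ∑ i, u i ^ 2 := by
    simpa using sq_sum_le_card_mul_sum_sq (s := Finset.univ) (f := u)
  rw [hmass]
  constructor
  · rw [div_mul_eq_mul_div]
    gcongr
    exact le_add_of_nonneg_right (sq_nonneg _)
  · calc (volume τ).toReal * (∑ i, u i ^ 2 + (∑ i, u i) ^ 2) / ((d + 1) * (d + 2))
        ≤ (volume τ).toReal * ((d + 2) * ∑ i, u i ^ 2) / ((d + 1) * (d + 2)) := by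
          gcongr
          linarith
      _ = (volume τ).toReal / (d + 1) * ∑ i, u i ^ 2 := by
          field_simp

/-- `L²`-stability (Riesz stability) of the nodal (barycentric)
basis on a nondegenerate `d`-simplex `τ` in `ℝ^d` with explicit constants:
`(|τ|/((d+1)(d+2))) ∑ uᵢ² ≤ ∫_τ (∑ uᵢ λᵢ)² ≤ (|τ|/(d+1)) ∑ uᵢ²`. -/
theorem nodal_basis_L2_riesz_stability
    (d : ℕ) (hd : 1 ≤ d)
    (x : Fin (d + 1) → EuclideanSpace ℝ (Fin d))
    (hx : AffineIndependent ℝ x)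
    (τ : Set (EuclideanSpace ℝ (Fin d)))
    (hτ : τ = convexHull ℝ (Set.range x))
    (lam : Fin (d + 1) → (EuclideanSpace ℝ (Fin d) →ᵃ[ℝ] ℝ))
    (hlam : ∀ i j, lam i (x j) = if i = j then 1 else 0)
    (u : Fin (d + 1) → ℝ) :
    (volume τ).toReal / (((d : ℝ) + 1) * ((d : ℝ) + 2)) * ∑ i, (u i) ^ 2 ≤
        ∫ y in τ, (∑ i, u i * lam i y) ^ 2 ∧
      ∫ y in τ, (∑ i, u i * lam i y) ^ 2 ≤
        (volume τ).toReal / ((d : ℝ) + 1) * ∑ i, (u i) ^ 2 :=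
  nodal_basis_L2_riesz_stability_general d x hx τ hτ lam hlam u
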